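/- Let M ≥ 1 be an integer, and let r_1, …, r_M ∈ [0,1] and ω_1, …, ω_M ∈ ℝ be such that ∫₀¹ s(x)·x dx = Σ_{k=1}^{M} ω_k s(r_k) for every polynomial s of degree at most 2M−2. Set θ_l = 2πl/(2M−1) for l = 1, …, 2M−1. Let f : D → ℝ be a finite linear combination f(r,θ) = Σ α_{i,j}^ℓ · \bar{Z}_{i,j}^ℓ(r,θ), the sum running over ℓ ∈ {0,1} and nonnegative integers i, j with i + 2j ≤ M−1 (with ℓ = 1 only when i = 0). Then each coefficient satisfies α_{i,j}^ℓ = Σ_{k=1}^{M} [ \bar{R}_{i,j}(r_k) · ω_k · Σ_{l=1}^{2M−1} (2π/(2M−1)) · f(r_k, θ_l) · S_i^ℓ(θ_l) ]. -/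

import Mathlib

open Finset Real

/-- The two-dimensional radial Zernike polynomial `R_{N,n}`. -/
noncomputable def zernikeR (N n : ℕ) (x : ℝ) : ℝ :=
  x ^ N * ∑ k ∈ Finset.range (n + 1),
    (-1 : ℝ) ^ k * (Nat.choose (n + N) k : ℝ) * (Nat.choose n k : ℝ) *
      x ^ (2 * (n - k)) * (1 - x ^ 2) ^ k

/-- The normalized two-dimensional radial Zernike polynomial `R̄_{N,n}`,
satisfying `∫₀¹ R̄_{N,n}(x)² x dx = 1`. -/
noncomputable def zernikeRbar (N n : ℕ) (x : ℝ) : ℝ :=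
  Real.sqrt (2 * (2 * n + N + 1)) * zernikeR N n x

/-- The angular factor `S_N^ℓ` of the Zernike polynomial `Z_{N,n}^ℓ`. -/
noncomputable def zernikeS (N : ℕ) (ℓ : Fin 2) (θ : ℝ) : ℝ :=
  if N = 0 then 1 / Real.sqrt (2 * Real.pi)
  else if ℓ = 0 then Real.sin (N * θ) / Real.sqrt Real.pi
  else Real.cos (N * θ) / Real.sqrt Real.pi


/-!
The right-hand side is the discrete inner product of `f` with `Z̄_{i,j}^ℓ` for the product rule
made of the radial quadrature and the equispaced rule on `m = 2M - 1` angles, so it suffices that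
the admissible `Z̄` are orthonormal for this discrete inner product.

Angularly, `S_N^ℓ(θ) = c_N cos(Nθ - β_ℓ)`, so a product of two angular factors is a combination
of `cos(kθ - β)` with `k = N ± N'`, and the sum of `cos(kθ_l - β)` over the `m`-th roots of unity
vanishes unless `m ∣ k`; for `N + N' < m` this gives exact discrete orthonormality. Once the
angular indices agree, `R̄_{N,n} R̄_{N,n'}` is a polynomial of degree at most `2M - 2`, so the
quadrature reproduces `∫₀¹ R̄_{N,n} R̄_{N,n'} x dx = δ_{n n'}`. That continuous orthogonality comes
from the moments `∫₀¹ x^{2m+N} R_{N,n}(x) x dx`, which are beta integrals summing to a multiple of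
`C(m, n)`, hence vanish for `m < n`.
-/

open Polynomial intervalIntegral MeasureTheory
open scoped Nat

lemma integral_pow_mul_one_sub_sq_pow (a b : ℕ) :
    ∫ x in (0:ℝ)..1, x ^ (2 * a + 1) * (1 - x ^ 2) ^ b
      = (a ! * b ! : ℝ) / (2 * (a + b + 1)!) := by
  induction b generalizing a with
  | zero =>
    simp only [pow_zero, mul_one, integral_pow, Nat.factorial_zero, add_zero]
    push_cast [Nat.factorial_succ]
    field_simp
    ring
  | succ b ih =>
    have hint : ∀ c, IntervalIntegrable (fun x : ℝ => x ^ (2 * c + 1) * (1 - x ^ 2) ^ b)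
        volume 0 1 := fun c => by apply Continuous.intervalIntegrable; fun_prop
    calc ∫ x in (0:ℝ)..1, x ^ (2 * a + 1) * (1 - x ^ 2) ^ (b + 1)
        = (∫ x in (0:ℝ)..1, x ^ (2 * a + 1) * (1 - x ^ 2) ^ b)
            - ∫ x in (0:ℝ)..1, x ^ (2 * (a + 1) + 1) * (1 - x ^ 2) ^ b := by
          rw [← integral_sub (hint a) (hint (a + 1))]
          exact integral_congr fun x _ => by ring
      _ = _ := by
          rw [ih, ih, show a + 1 + b + 1 = a + b + 1 + 1 by ring,
            show a + (b + 1) + 1 = a + b + 1 + 1 by ring, Nat.factorial_succ (a + b + 1),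
            Nat.factorial_succ a, Nat.factorial_succ b]
          push_cast
          field_simp
          ring

lemma sum_neg_one_pow_mul_choose_mul_choose (A m n : ℕ) (hn : n ≤ A) :
    ∑ k ∈ range (n + 1), (-1 : ℤ) ^ k * A.choose k * (A + m - k).choose (n - k)
      = m.choose n := by
  have hexp : (1 + X : ℤ[X]) ^ m
      = ∑ k ∈ range (A + 1), C ((-1 : ℤ) ^ k * A.choose k) * (1 + X) ^ (A + m - k) * X ^ k := by
    calc (1 + X : ℤ[X]) ^ m = (-X + (1 + X)) ^ A * (1 + X) ^ m := by ring
      _ = _ := by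
        rw [add_pow, sum_mul]
        refine sum_congr rfl fun k hk => ?_
        rw [show A + m - k = A - k + m by have := mem_range.mp hk; omega]
        rw [neg_pow, pow_add]
        simp only [map_mul, map_pow, map_neg, map_one, map_natCast]
        ring
  have hcoeff := congrArg (coeff · n) hexp
  simp only [coeff_one_add_X_pow, finsetSum_coeff, coeff_mul_X_pow', coeff_C_mul] at hcoeff
  rw [hcoeff, sum_ite, sum_const_zero, add_zero]
  refine sum_congr (by ext k; simp only [mem_filter, mem_range]; omega) fun k _ => rfl

lemma Nat.choose_mul_factorial_add_sub_mul_factorial (p n k : ℕ) (hk : k ≤ n) :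
    n.choose k * (p + n - k)! * k ! = n ! * p ! * (p + n - k).choose (n - k) := by
  apply Nat.eq_of_mul_eq_mul_right (Nat.factorial_pos (n - k))
  have h := Nat.choose_mul_factorial_mul_factorial (show n - k ≤ p + n - k by omega)
  rw [show p + n - k - (n - k) = p by omega] at h
  calc n.choose k * (p + n - k)! * k ! * (n - k)!
      = (n.choose k * k ! * (n - k)!) * (p + n - k)! := by ring
    _ = n ! * ((p + n - k).choose (n - k) * (n - k)! * p !) := by
        rw [Nat.choose_mul_factorial_mul_factorial hk, h]
    _ = _ := by ring

noncomputable def zernikeQ (N n : ℕ) : ℝ[X] :=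
  ∑ k ∈ range (n + 1), C ((-1 : ℝ) ^ k * (n + N).choose k * n.choose k) * X ^ (n - k) * (1 - X) ^ k

lemma zernikeR_eq_eval_zernikeQ (N n : ℕ) (x : ℝ) :
    zernikeR N n x = x ^ N * (zernikeQ N n).eval (x ^ 2) := by
  simp [zernikeR, zernikeQ, eval_finsetSum, pow_mul]

lemma natDegree_zernikeQ_le (N n : ℕ) : (zernikeQ N n).natDegree ≤ n := by
  refine natDegree_sum_le_of_forall_le _ _ fun k hk => ?_
  have hk : k ≤ n := Nat.lt_succ_iff.mp (mem_range.mp hk)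
  calc _ ≤ 0 + (n - k) + k * 1 := by
        refine natDegree_mul_le_of_le (natDegree_mul_le_of_le (natDegree_C _).le
          (natDegree_X_pow_le _)) (natDegree_pow_le_of_le _ ?_)
        exact (natDegree_sub_le _ _).trans (by simp)
    _ = n := by omega

lemma coeff_zernikeQ_self (N n : ℕ) : (zernikeQ N n).coeff n = (2 * n + N).choose n := by
  have hterm : ∀ k ∈ range (n + 1), (C ((-1 : ℝ) ^ k * (n + N).choose k * n.choose k)
      * X ^ (n - k) * (1 - X) ^ k).coeff n = (((n + N).choose k * n.choose (n - k) : ℕ) : ℝ) := by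
    intro k hk
    have hk : k ≤ n := Nat.lt_succ_iff.mp (mem_range.mp hk)
    have htop : ((1 - X : ℝ[X]) ^ k).coeff k = (-1) ^ k := by
      rw [show (1 - X : ℝ[X]) ^ k = C ((-1) ^ k) * (X + C (-1)) ^ k by
        rw [map_pow, ← mul_pow]; congr 1; simp; ring, coeff_C_mul, coeff_X_add_C_pow]
      simp
    rw [mul_assoc, mul_comm (X ^ _), ← mul_assoc, coeff_mul_X_pow', if_pos (Nat.sub_le n k),
      Nat.sub_sub_self hk, coeff_C_mul, htop, Nat.choose_symm hk]
    push_cast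
    linear_combination ((n + N).choose k * n.choose k : ℝ) * (Even.neg_one_pow ⟨k, rfl⟩ :
      (-1 : ℝ) ^ (k + k) = 1)
  have hvand := Nat.add_choose_eq (n + N) n n
  rw [Finset.Nat.sum_antidiagonal_eq_sum_range_succ (fun a b => (n + N).choose a * n.choose b),
    show n + N + n = 2 * n + N by ring] at hvand
  rw [zernikeQ.eq_def, finsetSum_coeff, sum_congr rfl hterm, ← Nat.cast_sum, hvand]

lemma continuous_zernikeR (N n : ℕ) : Continuous (zernikeR N n) := by
  unfold zernikeR; fun_prop

lemma integral_pow_mul_zernikeR (N n m : ℕ) :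
    ∫ x in (0:ℝ)..1, x ^ (2 * m + N) * zernikeR N n x * x
      = m.choose n * n ! * (N + m)! / (2 * (N + m + n + 1)!) := by
  set c : ℕ → ℝ := fun k => (-1) ^ k * (n + N).choose k * n.choose k
  have hexpand : ∀ x : ℝ, x ^ (2 * m + N) * zernikeR N n x * x
      = ∑ k ∈ range (n + 1), c k * (x ^ (2 * (N + m + n - k) + 1) * (1 - x ^ 2) ^ k) := by
    intro x
    simp only [zernikeR, mul_sum, sum_mul]
    refine sum_congr rfl fun k hk => ?_
    have hk : k ≤ n := Nat.lt_succ_iff.mp (mem_range.mp hk)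
    rw [show 2 * (N + m + n - k) + 1 = (2 * m + N) + N + 2 * (n - k) + 1 by omega]
    ring
  have hterm : ∀ k ∈ range (n + 1),
      c k * ∫ x in (0:ℝ)..1, x ^ (2 * (N + m + n - k) + 1) * (1 - x ^ 2) ^ k
        = n ! * (N + m)! / (2 * (N + m + n + 1)!)
          * ((-1 : ℤ) ^ k * (n + N).choose k * (n + N + m - k).choose (n - k) : ℤ) := by
    intro k hk
    have hk : k ≤ n := Nat.lt_succ_iff.mp (mem_range.mp hk)
    have hfact := congrArg (Nat.cast : ℕ → ℝ)
      (Nat.choose_mul_factorial_add_sub_mul_factorial (N + m) n k hk)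
    push_cast at hfact
    rw [integral_pow_mul_one_sub_sq_pow, show N + m + n - k + k + 1 = N + m + n + 1 by omega,
      show n + N + m - k = N + m + n - k by omega]
    push_cast
    field_simp
    linear_combination (-1 : ℝ) ^ k * (n + N).choose k * hfact
  rw [integral_congr fun x _ => hexpand x, intervalIntegral.integral_finsetSum fun k _ =>
      (by apply Continuous.intervalIntegrable; fun_prop), sum_congr rfl fun k _ =>
      intervalIntegral.integral_const_mul _ _, sum_congr rfl hterm, ← mul_sum, ← Int.cast_sum,
    sum_neg_one_pow_mul_choose_mul_choose _ _ _ (Nat.le_add_right n N)]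
  push_cast
  ring

lemma integral_zernikeR_mul_zernikeR_of_le (N : ℕ) {n n' : ℕ} (h : n' ≤ n) :
    ∫ x in (0:ℝ)..1, zernikeR N n x * zernikeR N n' x * x
      = if n' = n then (1 : ℝ) / (2 * (2 * n + N + 1)) else 0 := by
  set q := zernikeQ N n'
  have hexpand : ∀ x : ℝ, zernikeR N n x * zernikeR N n' x * x
      = ∑ m ∈ range (n' + 1), q.coeff m * (x ^ (2 * m + N) * zernikeR N n x * x) := by
    intro x
    rw [zernikeR_eq_eval_zernikeQ N n' x,
      eval_eq_sum_range' (Nat.lt_succ_of_le (natDegree_zernikeQ_le N n')), mul_sum, mul_sum, sum_mul]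
    refine sum_congr rfl fun m _ => ?_
    ring
  rw [integral_congr fun x _ => hexpand x, intervalIntegral.integral_finsetSum fun m _ =>
      (by have := continuous_zernikeR N n; apply Continuous.intervalIntegrable; fun_prop)]
  simp only [intervalIntegral.integral_const_mul, integral_pow_mul_zernikeR]
  split_ifs with hn
  · subst hn
    rw [sum_eq_single_of_mem n' (self_mem_range_succ n') fun m hm hmn => by
      rw [Nat.choose_eq_zero_of_lt (by have := mem_range.mp hm; omega)]; simp]
    have hfact := Nat.choose_mul_factorial_mul_factorial (show n' ≤ 2 * n' + N by omega)
    rw [show 2 * n' + N - n' = N + n' by omega] at hfact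
    rw [coeff_zernikeQ_self, Nat.choose_self, show N + n' + n' + 1 = 2 * n' + N + 1 by omega,
      Nat.factorial_succ, ← hfact]
    have hchoose : ((2 * n' + N).choose n' : ℝ) ≠ 0 := by
      exact_mod_cast (Nat.choose_pos (by omega)).ne'
    push_cast
    field_simp
  · refine sum_eq_zero fun m hm => ?_
    rw [Nat.choose_eq_zero_of_lt (by have := mem_range.mp hm; omega)]
    simp

lemma integral_zernikeRbar_mul_zernikeRbar (N n n' : ℕ) :
    ∫ x in (0:ℝ)..1, zernikeRbar N n x * zernikeRbar N n' x * x = if n = n' then 1 else 0 := by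
  wlog h : n' ≤ n generalizing n n'
  · simp_rw [mul_comm (zernikeRbar N n _)]
    rw [this n' n (by omega)]
    simp only [eq_comm]
  have hfactor : ∀ x, zernikeRbar N n x * zernikeRbar N n' x * x
      = √(2 * (2 * n + N + 1)) * √(2 * (2 * n' + N + 1)) * (zernikeR N n x * zernikeR N n' x * x) :=
    fun x => by simp only [zernikeRbar]; ring
  rw [integral_congr fun x _ => hfactor x, intervalIntegral.integral_const_mul,
    integral_zernikeR_mul_zernikeR_of_le N h]
  obtain rfl | hn := eq_or_ne n n'
  · rw [if_pos rfl, if_pos rfl, ← sqrt_mul (by positivity), sqrt_mul_self (by positivity)]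
    field_simp
  · simp [hn, hn.symm]

lemma exists_natDegree_le_eval_eq_zernikeRbar (N n : ℕ) :
    ∃ p : ℝ[X], p.natDegree ≤ N + 2 * n ∧ ∀ x, p.eval x = zernikeRbar N n x := by
  refine ⟨C √(2 * (2 * n + N + 1)) * (X ^ N * (zernikeQ N n).comp (X ^ 2)), ?_, fun x => ?_⟩
  · refine (natDegree_C_mul_le _ _).trans (natDegree_mul_le_of_le (natDegree_X_pow_le N) ?_)
    refine natDegree_comp_le.trans ?_
    rw [natDegree_X_pow, mul_comm]
    exact Nat.mul_le_mul_left 2 (natDegree_zernikeQ_le N n)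
  · simp [zernikeRbar, zernikeR_eq_eval_zernikeQ]

lemma sum_mul_zernikeRbar_mul_zernikeRbar {M d : ℕ} {r ω : ℕ → ℝ}
    (hquad : ∀ s : ℝ[X], s.natDegree ≤ d →
      ∫ x in (0:ℝ)..1, s.eval x * x = ∑ k ∈ range M, ω k * s.eval (r k))
    {N n n' : ℕ} (hd : N + 2 * n + (N + 2 * n') ≤ d) :
    ∑ k ∈ range M, ω k * (zernikeRbar N n (r k) * zernikeRbar N n' (r k))
      = if n = n' then 1 else 0 := by
  obtain ⟨p, hp, hpeval⟩ := exists_natDegree_le_eval_eq_zernikeRbar N n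
  obtain ⟨p', hp', hp'eval⟩ := exists_natDegree_le_eval_eq_zernikeRbar N n'
  have h := hquad (p * p') (natDegree_mul_le_of_le hp hp' |>.trans hd)
  simp only [eval_mul, hpeval, hp'eval, integral_zernikeRbar_mul_zernikeRbar] at h
  exact h.symm

lemma sum_Icc_pow_of_pow_eq_one {K : Type*} [Field K] [DecidableEq K] {y : K} {m : ℕ}
    (hy : y ^ m = 1) :
    ∑ l ∈ Icc 1 m, y ^ l = if y = 1 then (m : K) else 0 := by
  have hshift : ∑ l ∈ Icc 1 m, y ^ l = y * ∑ l ∈ range m, y ^ l := by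
    rw [← Finset.Ico_add_one_right_eq_Icc, sum_Ico_eq_sum_range, mul_sum]
    exact sum_congr (by simp) fun l _ => by ring
  split_ifs with h1
  · simp [h1]
  · have hgeom := geom_sum_mul y m
    rw [hy, sub_self, mul_eq_zero, or_iff_left (sub_ne_zero.mpr h1)] at hgeom
    rw [hshift, hgeom, mul_zero]

lemma sum_Icc_cexp_mul_I {m : ℕ} (hm : m ≠ 0) (k : ℤ) :
    ∑ l ∈ Icc 1 m, Complex.exp (k * (l * (2 * π / m)) * Complex.I)
      = if (m : ℤ) ∣ k then (m : ℂ) else 0 := by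
  set ζ := Complex.exp (2 * π * Complex.I / m)
  have hζ : IsPrimitiveRoot ζ m := Complex.isPrimitiveRoot_exp m hm
  have hpow : ∀ l : ℕ, Complex.exp (k * (l * (2 * π / m)) * Complex.I) = (ζ ^ k) ^ l := by
    intro l
    rw [← Complex.exp_int_mul, ← Complex.exp_nat_mul]
    ring_nf
  have hm1 : (ζ ^ k) ^ m = 1 := by
    rw [← zpow_natCast, ← zpow_mul, mul_comm, zpow_mul, zpow_natCast, hζ.pow_eq_one, one_zpow]
  simp only [hpow, sum_Icc_pow_of_pow_eq_one hm1, hζ.zpow_eq_one_iff_dvd]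

lemma sum_Icc_cos_int_mul_sub {m : ℕ} (hm : m ≠ 0) (k : ℤ) (β : ℝ) :
    ∑ l ∈ Icc 1 m, cos (k * (l * (2 * π / m)) - β) = if (m : ℤ) ∣ k then m * cos β else 0 := by
  have hre : ∀ x : ℝ,
      cos (x - β) = (Complex.exp (-β * Complex.I) * Complex.exp (x * Complex.I)).re := by
    intro x
    rw [← Complex.exp_add, show -β * Complex.I + x * Complex.I = ((x - β : ℝ) : ℂ) * Complex.I by
      push_cast; ring, Complex.exp_ofReal_mul_I_re]
  simp only [hre, ← Complex.re_sum, ← mul_sum]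
  push_cast
  rw [sum_Icc_cexp_mul_I hm k]
  split_ifs
  · rw [mul_comm, ← Complex.ofReal_natCast, Complex.re_ofReal_mul, ← Complex.ofReal_neg,
      Complex.exp_ofReal_mul_I_re, cos_neg]
  · simp

lemma zernikeS_eq_mul_cos {N : ℕ} {ℓ : Fin 2} (hℓ : N = 0 → ℓ = 1) (θ : ℝ) :
    zernikeS N ℓ θ = (if N = 0 then 1 / √(2 * π) else 1 / √π)
      * cos (N * θ - if ℓ = 0 then π / 2 else 0) := by
  by_cases hN : N = 0
  · simp [zernikeS, hN, hℓ hN]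
  · by_cases hℓ0 : ℓ = 0
    · simp only [zernikeS, hN, hℓ0, if_false, if_true, cos_sub_pi_div_two]
      ring
    · simp [zernikeS, hN, hℓ0, div_eq_inv_mul]

lemma Int.natCast_dvd_sub_iff_of_add_lt {m a b : ℕ} (h : a + b < m) :
    (m : ℤ) ∣ (a - b : ℤ) ↔ a = b := by
  refine ⟨fun hd => ?_, fun hab => by simp [hab]⟩
  have := Int.eq_zero_of_abs_lt_dvd hd (by rw [abs_lt]; omega)
  omega

lemma Int.natCast_dvd_add_iff_of_add_lt {m a b : ℕ} (h : a + b < m) :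
    (m : ℤ) ∣ (a + b : ℤ) ↔ a = 0 ∧ b = 0 := by
  refine ⟨fun hd => ?_, fun hab => by simp [hab]⟩
  have := Int.eq_zero_of_abs_lt_dvd hd (by rw [abs_lt]; omega)
  omega

lemma sum_Icc_cos_mul_cos {m N N' : ℕ} (h : N + N' < m) (β β' : ℝ) :
    ∑ l ∈ Icc 1 m, cos (N * (l * (2 * π / m)) - β) * cos (N' * (l * (2 * π / m)) - β')
      = m / 2 * ((if N = N' then cos (β - β') else 0)
          + if N = 0 ∧ N' = 0 then cos (β + β') else 0) := by
  have hprod : ∀ x : ℝ, cos (N * x - β) * cos (N' * x - β')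
      = (cos (((N - N' : ℤ) : ℝ) * x - (β - β'))
          + cos (((N + N' : ℤ) : ℝ) * x - (β + β'))) / 2 := by
    intro x
    push_cast
    rw [show ((N : ℝ) - N') * x - (β - β') = (N * x - β) - (N' * x - β') by ring,
      show ((N : ℝ) + N') * x - (β + β') = (N * x - β) + (N' * x - β') by ring,
      cos_sub (N * x - β), cos_add (N * x - β)]
    ring
  have hm : m ≠ 0 := by omega
  simp only [hprod, ← sum_div, sum_add_distrib, sum_Icc_cos_int_mul_sub hm,
    Int.natCast_dvd_sub_iff_of_add_lt h, Int.natCast_dvd_add_iff_of_add_lt h]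
  split_ifs <;> ring

lemma sum_zernikeS_mul_zernikeS {m N N' : ℕ} (h : N + N' < m) {ℓ ℓ' : Fin 2}
    (hℓ : N = 0 → ℓ = 1) (hℓ' : N' = 0 → ℓ' = 1) :
    2 * π / m * ∑ l ∈ Icc 1 m, zernikeS N ℓ (l * (2 * π / m)) * zernikeS N' ℓ' (l * (2 * π / m))
      = if N = N' ∧ ℓ = ℓ' then 1 else 0 := by
  simp only [zernikeS_eq_mul_cos hℓ, zernikeS_eq_mul_cos hℓ', mul_mul_mul_comm _ (cos _),
    ← mul_sum, sum_Icc_cos_mul_cos h]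
  have hm : (m : ℝ) ≠ 0 := by exact_mod_cast (show m ≠ 0 by omega)
  have hπ := pi_pos
  by_cases hNN : N = N'
  · subst hNN
    by_cases hN : N = 0
    · simp [hN, hℓ hN, hℓ' hN]
      field_simp
      simp only [sq_sqrt hπ.le, sq_sqrt zero_le_two]
      ring
    · fin_cases ℓ <;> fin_cases ℓ' <;> simp [hN] <;> field_simp <;> rw [sq_sqrt hπ.le]
  · have hN0 : ¬(N = 0 ∧ N' = 0) := fun h0 => hNN (h0.1.trans h0.2.symm)
    simp [hNN, hN0]

def zernikeIndices (M : ℕ) : Finset (ℕ × ℕ × Fin 2) :=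
  (range M ×ˢ range M ×ˢ univ).filter fun b => b.1 + 2 * b.2.1 ≤ M - 1 ∧ (b.1 = 0 → b.2.2 = 1)

lemma mem_zernikeIndices {M : ℕ} (hM : 1 ≤ M) {b : ℕ × ℕ × Fin 2} :
    b ∈ zernikeIndices M ↔ b.1 + 2 * b.2.1 ≤ M - 1 ∧ (b.1 = 0 → b.2.2 = 1) := by
  simp only [zernikeIndices, mem_filter, mem_product, mem_range, mem_univ, and_true,
    and_iff_right_iff_imp]
  omega

noncomputable def zernikeZbar (N n : ℕ) (ℓ : Fin 2) (ρ θ : ℝ) : ℝ :=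
  zernikeRbar N n ρ * zernikeS N ℓ θ

lemma sum_zernikeZbar_mul_zernikeZbar {M : ℕ} (hM : 1 ≤ M) {r ω : ℕ → ℝ}
    (hquad : ∀ s : ℝ[X], s.natDegree ≤ 2 * M - 2 →
      ∫ x in (0:ℝ)..1, s.eval x * x = ∑ k ∈ range M, ω k * s.eval (r k))
    {i j i' j' : ℕ} {ℓ ℓ' : Fin 2} (hij : i + 2 * j ≤ M - 1) (hℓ : i = 0 → ℓ = 1)
    (hij' : i' + 2 * j' ≤ M - 1) (hℓ' : i' = 0 → ℓ' = 1) :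
    ∑ k ∈ range M, ω k * ∑ l ∈ Icc 1 (2 * M - 1), 2 * π / (2 * M - 1 : ℕ) *
      (zernikeZbar i j ℓ (r k) (l * (2 * π / (2 * M - 1 : ℕ)))
        * zernikeZbar i' j' ℓ' (r k) (l * (2 * π / (2 * M - 1 : ℕ))))
      = if i = i' ∧ j = j' ∧ ℓ = ℓ' then 1 else 0 := by
  have hsplit : ∀ k, ∑ l ∈ Icc 1 (2 * M - 1), 2 * π / (2 * M - 1 : ℕ) *
      (zernikeZbar i j ℓ (r k) (l * (2 * π / (2 * M - 1 : ℕ)))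
        * zernikeZbar i' j' ℓ' (r k) (l * (2 * π / (2 * M - 1 : ℕ))))
      = zernikeRbar i j (r k) * zernikeRbar i' j' (r k) * if i = i' ∧ ℓ = ℓ' then 1 else 0 := by
    intro k
    rw [← sum_zernikeS_mul_zernikeS (m := 2 * M - 1) (by omega) hℓ hℓ', mul_sum, mul_sum]
    exact sum_congr rfl fun l _ => by simp only [zernikeZbar]; ring
  simp only [hsplit]
  by_cases hiℓ : i = i' ∧ ℓ = ℓ'
  · obtain ⟨rfl, rfl⟩ := hiℓ
    simp only [and_true, true_and, if_true, mul_one]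
    exact sum_mul_zernikeRbar_mul_zernikeRbar hquad (by omega)
  · have : ¬(i = i' ∧ j = j' ∧ ℓ = ℓ') := fun h => hiℓ ⟨h.1, h.2.2⟩
    simp [hiℓ, this]

lemma sum_mul_sum_eq_of_orthonormal {R ι κ : Type*} [CommSemiring R] [DecidableEq ι]
    {s : Finset ι} {t : Finset κ} {w : κ → R} {v : ι → κ → R} {a : ι} (ha : a ∈ s)
    (horth : ∀ b ∈ s, ∑ p ∈ t, w p * (v a p * v b p) = if a = b then 1 else 0) (c : ι → R) :
    ∑ p ∈ t, w p * (v a p * ∑ b ∈ s, c b * v b p) = c a := by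
  calc ∑ p ∈ t, w p * (v a p * ∑ b ∈ s, c b * v b p)
      = ∑ b ∈ s, c b * ∑ p ∈ t, w p * (v a p * v b p) := by
        simp only [mul_sum]
        rw [sum_comm]
        exact sum_congr rfl fun b _ => sum_congr rfl fun p _ => by ring
    _ = c a := by
        rw [sum_congr rfl fun b hb => by rw [horth b hb]]
        simp [ha]

theorem zernike_interpolation_general
    (M : ℕ) (hM : 1 ≤ M) (r ω : ℕ → ℝ)
    (hquad : ∀ s : Polynomial ℝ, s.natDegree ≤ 2 * M - 2 →
      ∫ x in (0:ℝ)..1, s.eval x * x = ∑ k ∈ Finset.range M, ω k * s.eval (r k))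
    (α : ℕ → ℕ → Fin 2 → ℝ) (f : ℝ → ℝ → ℝ)
    (hf : ∀ ρ θ, f ρ θ =
      ∑ i ∈ Finset.range M, ∑ j ∈ Finset.range M, ∑ ℓ : Fin 2,
        if i + 2 * j ≤ M - 1 ∧ (i = 0 → ℓ = 1) then
          α i j ℓ * zernikeRbar i j ρ * zernikeS i ℓ θ
        else 0)
    (i j : ℕ) (ℓ : Fin 2) (hij : i + 2 * j ≤ M - 1) (hℓ : i = 0 → ℓ = 1) :
    α i j ℓ = ∑ k ∈ Finset.range M, (zernikeRbar i j (r k) * ω k *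
      ∑ l ∈ Finset.Icc 1 (2 * M - 1),
        (2 * Real.pi / (2 * M - 1)) * f (r k) ((l : ℝ) * (2 * Real.pi / (2 * M - 1)))
          * zernikeS i ℓ ((l : ℝ) * (2 * Real.pi / (2 * M - 1)))) := by
  rw [show (2 * M - 1 : ℝ) = (2 * M - 1 : ℕ) by rw [Nat.cast_sub (by omega)]; push_cast; ring]
  set w : ℕ × ℕ → ℝ := fun p => ω p.1 * (2 * π / (2 * M - 1 : ℕ))
  set v : ℕ × ℕ × Fin 2 → ℕ × ℕ → ℝ := fun b p =>
    zernikeZbar b.1 b.2.1 b.2.2 (r p.1) (p.2 * (2 * π / (2 * M - 1 : ℕ)))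
  have horth : ∀ b ∈ zernikeIndices M,
      ∑ p ∈ range M ×ˢ Icc 1 (2 * M - 1), w p * (v (i, j, ℓ) p * v b p)
        = if (i, j, ℓ) = b then 1 else 0 := by
    rintro ⟨i', j', ℓ'⟩ hb
    rw [mem_zernikeIndices hM] at hb
    simp only [Prod.mk.injEq, sum_product, w, v]
    rw [← sum_zernikeZbar_mul_zernikeZbar hM hquad hij hℓ hb.1 hb.2]
    simp only [mul_sum, mul_assoc]
  rw [← sum_mul_sum_eq_of_orthonormal ((mem_zernikeIndices hM).2 ⟨hij, hℓ⟩) horth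
    fun b => α b.1 b.2.1 b.2.2, sum_product]
  refine sum_congr rfl fun k _ => ?_
  rw [mul_sum]
  refine sum_congr rfl fun l _ => ?_
  simp only [w, v, hf, zernikeIndices, sum_filter, sum_product, zernikeZbar, mul_assoc]
  ring

theorem zernike_interpolation
    (M : ℕ) (hM : 1 ≤ M) (r ω : ℕ → ℝ) (hr : ∀ k < M, r k ∈ Set.Icc (0:ℝ) 1)
    (hquad : ∀ s : Polynomial ℝ, s.natDegree ≤ 2 * M - 2 →
      ∫ x in (0:ℝ)..1, s.eval x * x = ∑ k ∈ Finset.range M, ω k * s.eval (r k))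
    (α : ℕ → ℕ → Fin 2 → ℝ) (f : ℝ → ℝ → ℝ)
    (hf : ∀ ρ θ, f ρ θ =
      ∑ i ∈ Finset.range M, ∑ j ∈ Finset.range M, ∑ ℓ : Fin 2,
        if i + 2 * j ≤ M - 1 ∧ (i = 0 → ℓ = 1) then
          α i j ℓ * zernikeRbar i j ρ * zernikeS i ℓ θ
        else 0)
    (i j : ℕ) (ℓ : Fin 2) (hij : i + 2 * j ≤ M - 1) (hℓ : i = 0 → ℓ = 1) :
    α i j ℓ = ∑ k ∈ Finset.range M, (zernikeRbar i j (r k) * ω k *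
      ∑ l ∈ Finset.Icc 1 (2 * M - 1),
        (2 * Real.pi / (2 * M - 1)) * f (r k) ((l : ℝ) * (2 * Real.pi / (2 * M - 1)))
          * zernikeS i ℓ ((l : ℝ) * (2 * Real.pi / (2 * M - 1)))) :=
  zernike_interpolation_general M hM r ω hquad α f hf i j ℓ hij hℓ
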